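/- For a prime p, an integer k ≥ 1, and s not divisible by p, the exponential sum S_k(s) = Σ_{x=0}^{p-1} e^{2πi s x^k / p} satisfies |S_k(s)| ≤ (k-1)√p. -/

import Mathlib

/-!
Let `d = gcd(k, p - 1)` and let `χ` be a multiplicative character of order `d`. In the cyclic
group `(ZMod p)ˣ` the `k`-th powers are exactly the kernel of `χ`, and each is hit `d` times,
so `#{x | x ^ k = a} = ∑ j < d, χ(a) ^ j`. Hence the sum equals `1 + ∑ j < d, g(χ ^ j, ψ)` for
the additive character `ψ(x) = exp(2πisx/p)`. The term `j = 0` is `g(1, ψ) = -1`, and the other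
`d - 1` Gauss sums have absolute value `√p`.
-/

open Finset

noncomputable def expSum (p k : ℕ) (s : ℤ) : ℂ :=
  ∑ x ∈ Finset.range p, Complex.exp (2 * Real.pi * Complex.I * s * (x : ℂ) ^ k / p)

lemma Fintype.sum_eq_add_sum_units {G₀ M : Type*} [GroupWithZero G₀] [Fintype G₀]
    [DecidableEq G₀] [AddCommMonoid M] (f : G₀ → M) :
    ∑ a, f a = f 0 + ∑ u : G₀ˣ, f u := by
  rw [Fintype.sum_eq_add_sum_compl 0 f, ← Fintype.sum_equiv unitsEquivNeZero.symm (fun a => f a)]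
  · rw [Finset.sum_subtype {0}ᶜ (p := (· ≠ 0)) (by simp)]
  · exact fun _ => rfl

lemma ZMod.sum_range_natCast {n : ℕ} [NeZero n] {M : Type*} [AddCommMonoid M] (f : ZMod n → M) :
    ∑ x ∈ range n, f x = ∑ x, f x :=
  Finset.sum_nbij' (↑) ZMod.val (by simp) (by simp [ZMod.val_lt])
    (fun x hx => by simp [ZMod.val_cast_of_lt (mem_range.mp hx)]) (by simp) (by simp)

lemma norm_gaussSum_eq_sqrt {F : Type*} [Field F] [Fintype F] {χ : MulChar F ℂ} (hχ : χ ≠ 1)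
    {ψ : AddChar F ℂ} (hψ : ψ ≠ 1) : ‖gaussSum χ ψ‖ = √(Fintype.card F) := by
  have h := gaussSum_mul_gaussSum_eq_card hχ (AddChar.IsPrimitive.of_ne_one hψ)
  rw [← star_gaussSum_eq, Complex.star_def, Complex.mul_conj'] at h
  have h' : ‖gaussSum χ ψ‖ ^ 2 = Fintype.card F := by exact_mod_cast h
  rw [← h', Real.sqrt_sq (norm_nonneg _)]

lemma IsCyclic.pow_gcd_card_mem_range_powMonoidHom {G : Type*} [CommGroup G] [Finite G]
    (g : G) (k : ℕ) : g ^ (Nat.card G).gcd k ∈ (powMonoidHom k : G →* G).range := by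
  refine ⟨g ^ (Nat.card G).gcdB k, ?_⟩
  calc (g ^ (Nat.card G).gcdB k) ^ k = g ^ ((k : ℤ) * (Nat.card G).gcdB k) := by
        rw [← zpow_natCast, ← zpow_mul, mul_comm]
    _ = g ^ ((Nat.card G : ℤ) * (Nat.card G).gcdA k + k * (Nat.card G).gcdB k) := by
        rw [zpow_add, zpow_mul g (Nat.card G), zpow_natCast, pow_card_eq_one', one_zpow, one_mul]
    _ = g ^ (Nat.card G).gcd k := by rw [← Nat.gcd_eq_gcd_ab, zpow_natCast]

lemma IsCyclic.card_filter_pow_eq {G : Type*} [CommGroup G] [IsCyclic G] [Fintype G]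
    [DecidableEq G] (k : ℕ) (a : G) :
    #{u | u ^ k = a} = if a ∈ (powMonoidHom k : G →* G).range then (Nat.card G).gcd k else 0 := by
  split_ifs with ha
  · have h := MonoidHom.card_fiber_eq_of_mem_range (powMonoidHom k) ha ⟨1, one_pow k⟩
    simp only [powMonoidHom_apply] at h
    rw [h, ← IsCyclic.card_powMonoidHom_ker, ← Fintype.card_subtype, ← Nat.card_eq_fintype_card]
    rfl
  · simp only [card_eq_zero, filter_eq_empty_iff, mem_univ, true_implies]
    exact fun u hu => ha ⟨u, hu⟩

namespace MulChar

variable {M : Type*} [CommMonoid M] {k : ℕ}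

lemma orderOf_eq_orderOf_apply {R : Type*} [CommMonoidWithZero R] {g : Mˣ}
    (hg : ∀ x, x ∈ Subgroup.zpowers g) (χ : MulChar M R) : orderOf χ = orderOf (χ g) :=
  orderOf_eq_orderOf_iff.mpr fun m => by
    rw [MulChar.eq_iff hg, MulChar.pow_apply_coe, MulChar.one_apply_coe]

lemma apply_eq_one_iff_mem_range_powMonoidHom [Finite Mˣ] [IsCyclic Mˣ] {R : Type*}
    [CommMonoidWithZero R] {χ : MulChar M R} (hχ : orderOf χ = (Nat.card Mˣ).gcd k) (a : Mˣ) :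
    χ a = 1 ↔ a ∈ (powMonoidHom k : Mˣ →* Mˣ).range := by
  constructor
  · intro ha
    obtain ⟨g, hg⟩ := IsCyclic.exists_generator (α := Mˣ)
    obtain ⟨i, rfl⟩ := (Submonoid.mem_powers_iff _ _).mp (mem_powers_iff_mem_zpowers.mpr (hg a))
    rw [Units.val_pow_eq_pow_val, map_pow] at ha
    obtain ⟨t, rfl⟩ := hχ ▸ χ.orderOf_eq_orderOf_apply hg ▸ orderOf_dvd_of_pow_eq_one ha
    rw [pow_mul]
    exact Subgroup.pow_mem _ (IsCyclic.pow_gcd_card_mem_range_powMonoidHom g k) t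
  · rintro ⟨b, rfl⟩
    have hk : χ ^ k = 1 := orderOf_dvd_iff_pow_eq_one.mp (hχ ▸ Nat.gcd_dvd_right _ _)
    rw [powMonoidHom_apply, Units.val_pow_eq_pow_val, map_pow, ← MulChar.pow_apply_coe, hk,
      MulChar.one_apply_coe]

variable [Fintype Mˣ] [DecidableEq Mˣ] [IsCyclic Mˣ] {R : Type*} [CommRing R] [IsDomain R]
  {χ : MulChar M R}

lemma card_filter_pow_eq_sum_pow_apply (hχ : orderOf χ = (Nat.card Mˣ).gcd k) (a : Mˣ) :
    (#{u | u ^ k = a} : R) = ∑ j ∈ range (orderOf χ), χ a ^ j := by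
  have hmem := χ.apply_eq_one_iff_mem_range_powMonoidHom hχ a
  rw [IsCyclic.card_filter_pow_eq]
  by_cases ha : χ a = 1
  · rw [if_pos (hmem.mp ha)]
    simp [ha, hχ]
  · rw [if_neg (mt hmem.mpr ha)]
    have hpow : χ a ^ orderOf χ = 1 := by
      rw [← pow_apply_coe, pow_orderOf_eq_one, one_apply_coe]
    have h := geom_sum_mul (χ a) (orderOf χ)
    rw [hpow, sub_self] at h
    simp [(mul_eq_zero.mp h).resolve_right (sub_ne_zero.mpr ha)]

lemma sum_units_pow_eq (hχ : orderOf χ = (Nat.card Mˣ).gcd k) (f : Mˣ → R) :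
    ∑ u, f (u ^ k) = ∑ j ∈ range (orderOf χ), ∑ u : Mˣ, (χ ^ j) u * f u :=
  calc ∑ u, f (u ^ k)
    _ = ∑ a, ∑ u with u ^ k = a, f (u ^ k) := (sum_fiberwise _ _ _).symm
    _ = ∑ a : Mˣ, (#{u | u ^ k = a} : R) * f a := sum_congr rfl fun a _ => by
      rw [sum_congr rfl fun u hu => by rw [(mem_filter.mp hu).2], sum_const, nsmul_eq_mul]
    _ = ∑ a : Mˣ, ∑ j ∈ range (orderOf χ), (χ ^ j) a * f a := by
      simp_rw [card_filter_pow_eq_sum_pow_apply hχ, sum_mul, pow_apply_coe]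
    _ = _ := sum_comm

end MulChar

lemma sum_addChar_pow_eq_one_add_sum_gaussSum {F R : Type*} [Field F] [Fintype F]
    [DecidableEq F] [CommRing R] [IsDomain R] {k : ℕ} (hk : k ≠ 0) {χ : MulChar F R}
    (hχ : orderOf χ = (Nat.card Fˣ).gcd k) (ψ : AddChar F R) :
    ∑ x, ψ (x ^ k) = 1 + ∑ j ∈ range (orderOf χ), gaussSum (χ ^ j) ψ := by
  rw [Fintype.sum_eq_add_sum_units, zero_pow hk, AddChar.map_zero_eq_one]
  simp_rw [← Units.val_pow_eq_pow_val]
  rw [MulChar.sum_units_pow_eq hχ (fun u => ψ u)]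
  congr 1
  refine sum_congr rfl fun j _ => ?_
  rw [gaussSum, Fintype.sum_eq_add_sum_units (fun a => (χ ^ j) a * ψ a),
    MulChar.map_zero, zero_mul, zero_add]

theorem norm_sum_addChar_pow_le {F : Type*} [Field F] [Fintype F] [DecidableEq F]
    {ψ : AddChar F ℂ} (hψ : ψ ≠ 1) {k : ℕ} (hk : k ≠ 0) :
    ‖∑ x, ψ (x ^ k)‖ ≤ (((Fintype.card F - 1).gcd k : ℕ) - 1 : ℝ) * √(Fintype.card F) := by
  set d := (Fintype.card F - 1).gcd k
  have hd : 0 < d := Nat.gcd_pos_of_pos_right _ (Nat.pos_of_ne_zero hk)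
  obtain ⟨χ, hχ⟩ := MulChar.exists_mulChar_orderOf F (Nat.gcd_dvd_left _ k)
    (Complex.isPrimitiveRoot_exp d hd.ne')
  have hχ' : orderOf χ = (Nat.card Fˣ).gcd k := by
    rw [hχ, Nat.card_eq_fintype_card, Fintype.card_units]
  have hgauss : ∀ j ∈ Ico 1 d, ‖gaussSum (χ ^ j) ψ‖ = √(Fintype.card F) := fun j hj => by
    obtain ⟨hj₁, hjd⟩ := mem_Ico.mp hj
    exact norm_gaussSum_eq_sqrt (pow_ne_one_of_lt_orderOf (by omega) (hχ ▸ hjd)) hψ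
  rw [sum_addChar_pow_eq_one_add_sum_gaussSum hk hχ', hχ, range_eq_Ico,
    sum_eq_sum_Ico_succ_bot hd, pow_zero, gaussSum_one_left hψ, add_neg_cancel_left]
  calc _ ≤ ∑ j ∈ Ico 1 d, ‖gaussSum (χ ^ j) ψ‖ := norm_sum_le _ _
    _ = _ := by rw [sum_congr rfl hgauss, sum_const, Nat.card_Ico, nsmul_eq_mul, Nat.cast_pred hd]

lemma expSum_eq_sum_mulShift_stdAddChar (p k : ℕ) [NeZero p] (s : ℤ) :
    expSum p k s = ∑ x : ZMod p, (ZMod.stdAddChar.mulShift (s : ZMod p)) (x ^ k) := by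
  rw [expSum, ← ZMod.sum_range_natCast]
  refine sum_congr rfl fun x _ => ?_
  have hcast : (s : ZMod p) * (x : ZMod p) ^ k = ((s * (x : ℤ) ^ k : ℤ) : ZMod p) := by
    push_cast; rfl
  rw [AddChar.mulShift_apply, hcast, ZMod.stdAddChar_coe]
  push_cast
  ring_nf

theorem stmt_0 (p k : ℕ) (s : ℤ) (hp : p.Prime) (hk : 1 ≤ k) (hs : ¬ (p : ℤ) ∣ s) :
    ‖expSum p k s‖ ≤ ((k : ℝ) - 1) * Real.sqrt p := by
  have : Fact p.Prime := ⟨hp⟩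
  have hψ : ZMod.stdAddChar.mulShift (s : ZMod p) ≠ 1 :=
    ZMod.isPrimitive_stdAddChar p (by rwa [Ne, ZMod.intCast_zmod_eq_zero_iff_dvd])
  rw [expSum_eq_sum_mulShift_stdAddChar]
  calc _ ≤ (((Fintype.card (ZMod p) - 1).gcd k : ℕ) - 1 : ℝ) * √(Fintype.card (ZMod p)) :=
        norm_sum_addChar_pow_le hψ (by omega)
    _ ≤ ((k : ℝ) - 1) * Real.sqrt p := by
        rw [ZMod.card]
        gcongr
        exact Nat.le_of_dvd hk (Nat.gcd_dvd_right _ _)
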